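/- For every finite multiset C of natural numbers all of whose elements are at least 2, and all natural numbers m and w, one has ST_MW(C, m, w) = ST_MW(C, w, m). (This is the symmetry of ST_MW from the paper's Corollary 'mwsymmetry', expressed as an identity of the recursively defined counting function.) -/

import Mathlib

def STN : Multiset ℕ → ℕ → ℕ
  | C, 0 =>
      if C = 0 then 1
      else (C.attach.map (fun c => 2 * c.1 * STN (C.erase c.1) c.1)).sum
  | C, (η + 1) =>
      STN C η + (C.attach.map (fun c => 2 * c.1 * STN (C.erase c.1) (η + 1 + c.1))).sum
  termination_by C η => (Multiset.card C, η)
  decreasing_by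
    · exact Prod.Lex.left _ _ (Multiset.card_erase_lt_of_mem c.2)
    · exact Prod.Lex.right _ (Nat.lt_succ_self η)
    · exact Prod.Lex.left _ _ (Multiset.card_erase_lt_of_mem c.2)

def STW : Multiset ℕ → ℕ → ℕ
  | _, 0 => 0
  | C, 1 =>
      if C = 0 then 1
      else (C.attach.map (fun c => 4 * c.1 * STW (C.erase c.1) (c.1 + 1))).sum
  | C, (w + 2) =>
      2 * STW C (w + 1) +
        (C.attach.map (fun c => 4 * c.1 * STW (C.erase c.1) (w + 2 + c.1))).sum
  termination_by C w => (Multiset.card C, w)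
  decreasing_by
    · exact Prod.Lex.left _ _ (Multiset.card_erase_lt_of_mem c.2)
    · exact Prod.Lex.right _ (Nat.lt_succ_self (w + 1))
    · exact Prod.Lex.left _ _ (Multiset.card_erase_lt_of_mem c.2)

def STC (C : Multiset ℕ) : ℕ :=
  (C.map (fun c => c * STW (C.erase c) c)).sum

def STMW : Multiset ℕ → ℕ → ℕ → ℕ
  | _, 0, _ => 0
  | _, _ + 1, 0 => 0
  | C, m + 1, w + 1 =>
      2 * STMW C (m + 1) w +
      (C.attach.map (fun c => 4 * c.1 * STMW (C.erase c.1) (m + 1) (w + 1 + c.1))).sum +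
      ∑ η ∈ Finset.range (m + 1),
        4 * (C.powerset.map (fun C' =>
              Nat.choose (C.sum + Multiset.card C + (m + 1) + (w + 1) - 1)
                  (C'.sum + Multiset.card C' + η) *
                STN C' η * STN (C - C') ((m + 1) + (w + 1) - η - 1))).sum
  termination_by C m w => (Multiset.card C, w)
  decreasing_by
    · exact Prod.Lex.right _ (Nat.lt_succ_self w)
    · exact Prod.Lex.left _ _ (Multiset.card_erase_lt_of_mem c.2)

def STM (C : Multiset ℕ) (m : ℕ) : ℕ :=
  (∑ η ∈ Finset.range m,
    (C.powerset.map (fun C' =>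
        Nat.choose (C.sum + Multiset.card C + m - 1) (C'.sum + Multiset.card C' + η) *
          STN C' η * STN (C - C') (m - η - 1))).sum) +
  (C.map (fun c => c * STMW (C.erase c) m c)).sum

/-!
Write `STNN C a b = Σ_{C' ≤ C} Binom(|C| + sum C + a + b, |C'| + sum C' + a) ST_N(C', a) ·`
`ST_N(C - C', b)` and `T C m w = Σ_{η < m} STNN C η (m + w - η)`, so that the recursion
of `STMW` reads `STMW C m (w+1) = 2 STMW C m w + Σ_c 4c STMW (C - c) m (w+1+c) + 4 T C m w`.
By induction on `m`, symmetry follows from the mirror recursion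
`STMW C (m+1) w = 2 STMW C m w + Σ_c 4c STMW (C - c) (m+1+c) w + 4 T C w m`,
which is proved by induction on `C` and `w`: the double sums over two crowns agree after
exchanging the two crowns, and what is left is an identity between `T`-terms. Replacing `C'`
by `C - C'` shows `STNN C a b = STNN C b a`, and Pascal's rule together with the recursion of
`ST_N` gives a Pascal-type recursion for `STNN`; summed along antidiagonals, these two facts
give the identity.
-/

namespace Multiset

variable {α M : Type*} [DecidableEq α]

theorem sum_map_sub_powerset [AddCommMonoid M] (s : Multiset α) (f : Multiset α → M) :
    (s.powerset.map fun t => f (s - t)).sum = (s.powerset.map f).sum := by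
  have h : s.powerset.map (fun t => s - t) = s.powerset := by
    simpa [antidiagonal_eq_map_powerset, Function.comp_def] using antidiagonal_map_fst s
  conv_rhs => rw [← h, map_map]
  rfl

theorem sum_powerset_sum_sub [AddCommMonoid M] (s : Multiset α) (f : α → Multiset α → M) :
    (s.powerset.map fun t => ((s - t).map fun a => f a t).sum).sum =
      (s.map fun a => ((s.erase a).powerset.map (f a)).sum).sum := by
  induction s using Multiset.induction generalizing f with
  | empty => simp
  | cons b s ih =>
    have h₁ : (s.powerset.map fun t => ((b ::ₘ s - t).map fun a => f a t).sum) =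
        s.powerset.map fun t => f b t + ((s - t).map fun a => f a t).sum :=
      map_congr rfl fun t ht => by
        rw [cons_sub_of_le b (mem_powerset.mp ht), map_cons, sum_cons]
    have h₂ : (s.map fun a => (((b ::ₘ s).erase a).powerset.map (f a)).sum) =
        s.map fun a => ((s.erase a).powerset.map (f a)).sum +
          ((s.erase a).powerset.map fun t => f a (b ::ₘ t)).sum :=
      map_congr rfl fun a ha => by
        rw [erase_cons_tail_of_mem ha, powerset_cons, map_add, sum_add, map_map]; rfl
    rw [powerset_cons, map_add, sum_add, map_map, h₁, sum_map_add, map_cons, sum_cons,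
      erase_cons_head, h₂, sum_map_add, ih, ← ih fun a t => f a (b ::ₘ t)]
    simp only [Function.comp_def, sub_cons, erase_cons_head]
    abel

theorem sum_map_sum_erase_comm [AddCancelCommMonoid M] (s : Multiset α) (f : α → α → M) :
    (s.map fun a => ((s.erase a).map (f a)).sum).sum =
      (s.map fun a => ((s.erase a).map fun b => f b a).sum).sum := by
  have key : ∀ g : α → α → M, (s.map fun a => g a a).sum +
      (s.map fun a => ((s.erase a).map (g a)).sum).sum =
        (s.map fun a => (s.map (g a)).sum).sum := by
    intro g
    rw [← sum_map_add]
    refine congrArg sum (map_congr rfl fun a ha => ?_)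
    rw [← sum_cons, ← map_cons, cons_erase ha]
  apply add_left_cancel (a := (s.map fun a => f a a).sum)
  rw [key f, key fun a b => f b a, sum_map_sum_map]

end Multiset

section AntidiagPrefixSum

variable {M : Type*} [AddCommMonoid M]

def antidiagPrefixSum (f : ℕ → ℕ → M) (p q : ℕ) : M :=
  ∑ i ∈ Finset.range p, f i (p + q - i)

@[simp]
theorem antidiagPrefixSum_zero (f : ℕ → ℕ → M) (q : ℕ) : antidiagPrefixSum f 0 q = 0 :=
  rfl

theorem antidiagPrefixSum_succ (f : ℕ → ℕ → M) (p q : ℕ) :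
    antidiagPrefixSum f (p + 1) q = antidiagPrefixSum f p (q + 1) + f p (q + 1) := by
  unfold antidiagPrefixSum
  rw [Finset.sum_range_succ, show p + 1 + q - p = q + 1 by omega,
    show p + 1 + q = p + (q + 1) by ring]

theorem antidiagPrefixSum_add (f : ℕ → ℕ → M) (c p q : ℕ) :
    antidiagPrefixSum f (c + p) q =
      antidiagPrefixSum f c (p + q) + antidiagPrefixSum (fun i j => f (c + i) j) p q := by
  unfold antidiagPrefixSum
  rw [Finset.sum_range_add, add_assoc]
  congr 1
  exact Finset.sum_congr rfl fun i _ => by rw [show c + (p + q) - (c + i) = p + q - i by omega]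

open Finset.HasAntidiagonal in
theorem antidiagPrefixSum_add_antidiagPrefixSum {f : ℕ → ℕ → M}
    (hf : ∀ i j, f i j = f j i) (a b : ℕ) :
    antidiagPrefixSum f (a + 1) b + antidiagPrefixSum f (b + 1) a =
      ∑ ij ∈ antidiagonal (a + b + 1), f ij.1 ij.2 := by
  rw [Finset.Nat.sum_antidiagonal_eq_sum_range_succ f,
    show (a + b + 1).succ = (a + 1) + (b + 1) by omega, Finset.sum_range_add,
    antidiagPrefixSum, antidiagPrefixSum]
  congr 1
  · exact Finset.sum_congr rfl fun i _ => by rw [show a + 1 + b = a + b + 1 by ring]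
  · rw [← Finset.sum_range_reflect]
    refine Finset.sum_congr rfl fun i hi => ?_
    rw [Finset.mem_range] at hi
    rw [hf]
    congr 1 <;> omega

theorem antidiagPrefixSum_succ_of_pascal {f g : ℕ → ℕ → M}
    (hf : ∀ a b, f (a + 1) (b + 1) = f (a + 1) b + f a (b + 1) + g (a + 1) (b + 1))
    (hf₀ : ∀ b, f 0 (b + 1) = f 0 b + g 0 (b + 1)) (m w : ℕ) :
    antidiagPrefixSum f (m + 1) w =
      2 • antidiagPrefixSum f m w + f m w + antidiagPrefixSum g (m + 1) w := by
  induction m generalizing w with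
  | zero => simp [antidiagPrefixSum_succ, hf₀]
  | succ m ih =>
    rw [antidiagPrefixSum_succ f (m + 1), ih, antidiagPrefixSum_succ f m,
      antidiagPrefixSum_succ g (m + 1), hf]
    abel

end AntidiagPrefixSum

theorem STN_zero_of_ne_zero {C : Multiset ℕ} (hC : C ≠ 0) :
    STN C 0 = (C.map fun c => 2 * c * STN (C.erase c) c).sum := by
  rw [STN, if_neg hC, Multiset.attach_map_val' C fun c => 2 * c * STN (C.erase c) c]

theorem STN_succ (C : Multiset ℕ) (a : ℕ) :
    STN C (a + 1) = STN C a + (C.map fun c => 2 * c * STN (C.erase c) (a + 1 + c)).sum := by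
  rw [STN, Multiset.attach_map_val' C fun c => 2 * c * STN (C.erase c) (a + 1 + c)]

def weight (C : Multiset ℕ) : ℕ :=
  C.sum + Multiset.card C

theorem weight_sub_add {C C' : Multiset ℕ} (h : C' ≤ C) :
    weight (C - C') + weight C' = weight C := by
  have hC := tsub_add_cancel_of_le h
  unfold weight
  rw [← congrArg Multiset.sum hC, ← congrArg Multiset.card hC, Multiset.sum_add,
    Multiset.card_add]
  ring

theorem weight_erase_add {C : Multiset ℕ} {c : ℕ} (h : c ∈ C) :
    weight (C.erase c) + c + 1 = weight C := by
  have hC := Multiset.cons_erase h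
  unfold weight
  rw [← congrArg Multiset.sum hC, ← congrArg Multiset.card hC, Multiset.sum_cons,
    Multiset.card_cons]
  ring

-- The four parameters are decoupled so that Pascal's rule (in `M` and `j`) and the recursions
-- of `STN` (in `a` and in `b`) can be applied one at a time.
def STNConv (C : Multiset ℕ) (M j a b : ℕ) : ℕ :=
  (C.powerset.map fun C' => M.choose (weight C' + j) * STN C' a * STN (C - C') b).sum

theorem STNConv_choose_succ_succ (C : Multiset ℕ) (M j a b : ℕ) :
    STNConv C (M + 1) (j + 1) a b = STNConv C M (j + 1) a b + STNConv C M j a b := by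
  unfold STNConv
  rw [← Multiset.sum_map_add]
  refine congrArg Multiset.sum (Multiset.map_congr rfl fun C' _ => ?_)
  rw [← add_assoc, Nat.choose_succ_succ']
  ring

theorem STNConv_comm {C : Multiset ℕ} {M j j' : ℕ} (hM : weight C + j + j' = M) (a b : ℕ) :
    STNConv C M j a b = STNConv C M j' b a := by
  unfold STNConv
  rw [← Multiset.sum_map_sub_powerset]
  refine congrArg Multiset.sum (Multiset.map_congr rfl fun C' hC' => ?_)
  have hle := Multiset.mem_powerset.mp hC'
  have hw := weight_sub_add hle
  rw [tsub_tsub_cancel_of_le hle,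
    Nat.choose_symm_of_eq_add (show M = (weight (C - C') + j) + (weight C' + j') by omega)]
  ring

theorem sum_powerset_STN_erase (C : Multiset ℕ) (M j a b : ℕ) :
    (C.powerset.map fun C' => M.choose (weight C' + j) * STN C' a *
        ((C - C').map fun c => 2 * c * STN ((C - C').erase c) (b + c)).sum).sum =
      (C.map fun c => 2 * c * STNConv (C.erase c) M j a (b + c)).sum := by
  have h : ∀ C' : Multiset ℕ, ∀ c : ℕ, (C - C').erase c = C.erase c - C' := fun C' c => by
    rw [← Multiset.sub_singleton, ← Multiset.sub_singleton, tsub_tsub, tsub_tsub, add_comm]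
  calc _ = (C.powerset.map fun C' => ((C - C').map fun c =>
          2 * c * (M.choose (weight C' + j) * STN C' a * STN (C.erase c - C') (b + c))).sum).sum :=
        congrArg Multiset.sum <| Multiset.map_congr rfl fun C' _ => by
          rw [← Multiset.sum_map_mul_left]
          refine congrArg Multiset.sum (Multiset.map_congr rfl fun c _ => ?_)
          rw [h]
          ring
    _ = _ := by
      rw [Multiset.sum_powerset_sum_sub (f := fun c C' =>
        2 * c * (M.choose (weight C' + j) * STN C' a * STN (C.erase c - C') (b + c)))]
      refine congrArg Multiset.sum (Multiset.map_congr rfl fun c _ => ?_)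
      rw [STNConv, ← Multiset.sum_map_mul_left]

theorem STNConv_succ_right (C : Multiset ℕ) (M j a b : ℕ) :
    STNConv C M j a (b + 1) =
      STNConv C M j a b + (C.map fun c => 2 * c * STNConv (C.erase c) M j a (b + 1 + c)).sum := by
  rw [← sum_powerset_STN_erase, STNConv, STNConv, ← Multiset.sum_map_add]
  refine congrArg Multiset.sum (Multiset.map_congr rfl fun C' _ => ?_)
  rw [STN_succ]
  ring

theorem STNConv_zero_right_of_lt {C : Multiset ℕ} {M j : ℕ} (h : M < weight C + j) (a : ℕ) :
    STNConv C M j a 0 = (C.map fun c => 2 * c * STNConv (C.erase c) M j a c).sum := by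
  have h₀ := sum_powerset_STN_erase C M j a 0
  simp only [zero_add] at h₀
  rw [← h₀, STNConv]
  refine congrArg Multiset.sum (Multiset.map_congr rfl fun C' hC' => ?_)
  by_cases hC'' : C - C' = 0
  · -- the term `C' = C`, where `STN 0 0 = 1` escapes the recursion, is killed by the binomial
    obtain rfl : C' = C :=
      le_antisymm (Multiset.mem_powerset.mp hC') (tsub_eq_zero_iff_le.mp hC'')
    rw [Nat.choose_eq_zero_of_lt h]
    simp
  · rw [STN_zero_of_ne_zero hC'']

theorem STNConv_succ_left {C : Multiset ℕ} {M j j' : ℕ} (hM : weight C + j + j' = M)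
    (a b : ℕ) :
    STNConv C M j (a + 1) b = STNConv C M j a b +
      (C.map fun c => 2 * c * STNConv (C.erase c) M (j + 1 + c) (a + 1 + c) b).sum := by
  rw [STNConv_comm hM, STNConv_succ_right, ← STNConv_comm hM]
  refine congrArg (HAdd.hAdd _) (congrArg Multiset.sum (Multiset.map_congr rfl fun c hc => ?_))
  have hw := weight_erase_add hc
  rw [STNConv_comm (show weight (C.erase c) + (j + 1 + c) + j' = M by omega)]

-- In `STMW C m w`, the `η`-th summand of the last sum is `4 * STNN C η (m + w - 1 - η)`.
def STNN (C : Multiset ℕ) (a b : ℕ) : ℕ :=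
  STNConv C (weight C + a + b) a a b

theorem STNConv_eq_STNN {C : Multiset ℕ} {M a b : ℕ} (hM : weight C + a + b = M) :
    STNConv C M a a b = STNN C a b := by
  rw [STNN, hM]

theorem STNN_comm (C : Multiset ℕ) (a b : ℕ) : STNN C a b = STNN C b a := by
  rw [STNN, STNConv_comm rfl, STNConv_eq_STNN (add_right_comm _ _ _)]

theorem STNN_succ_succ (C : Multiset ℕ) (a b : ℕ) :
    STNN C (a + 1) (b + 1) = STNN C (a + 1) b + STNN C a (b + 1) +
      (C.map fun c => 2 * c * (STNN (C.erase c) (a + 1) (b + 1 + c) +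
        STNN (C.erase c) (a + 1 + c) (b + 1))).sum := by
  set M := weight C + a + b + 1
  rw [STNN, show weight C + (a + 1) + (b + 1) = M + 1 by ring, STNConv_choose_succ_succ,
    STNConv_succ_right, STNConv_succ_left (show weight C + a + (b + 1) = M by ring),
    STNConv_eq_STNN (show weight C + (a + 1) + b = M by ring),
    STNConv_eq_STNN (show weight C + a + (b + 1) = M by ring)]
  have hsum : (C.map fun c => 2 * c * (STNN (C.erase c) (a + 1) (b + 1 + c) +
      STNN (C.erase c) (a + 1 + c) (b + 1))).sum =
      (C.map fun c => 2 * c * STNConv (C.erase c) M (a + 1) (a + 1) (b + 1 + c)).sum +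
      (C.map fun c => 2 * c * STNConv (C.erase c) M (a + 1 + c) (a + 1 + c) (b + 1)).sum := by
    rw [← Multiset.sum_map_add]
    refine congrArg Multiset.sum (Multiset.map_congr rfl fun c hc => ?_)
    have hw := weight_erase_add hc
    rw [STNConv_eq_STNN (by omega), STNConv_eq_STNN (by omega), mul_add]
  rw [hsum]
  ring

theorem STNN_zero_succ (C : Multiset ℕ) (b : ℕ) :
    STNN C 0 (b + 1) = STNN C 0 b + (C.map fun c => 2 * c *
      (STNN (C.erase c) 0 (b + 1 + c) + STNN (C.erase c) c (b + 1))).sum := by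
  -- Pascal's rule needs a positive lower index, hence the detour through `STNN C (b + 1) 0`.
  set M := weight C + b
  rw [STNN_comm C 0, STNN, show weight C + (b + 1) + 0 = M + 1 by ring,
    STNConv_choose_succ_succ, STNConv_zero_right_of_lt (show M < weight C + (b + 1) by omega),
    STNConv_succ_left (show weight C + b + 0 = M by ring),
    STNConv_eq_STNN (show weight C + b + 0 = M by ring), STNN_comm C b]
  have hsum : (C.map fun c => 2 * c *
      (STNN (C.erase c) 0 (b + 1 + c) + STNN (C.erase c) c (b + 1))).sum =
      (C.map fun c => 2 * c * STNConv (C.erase c) M (b + 1) (b + 1) c).sum +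
      (C.map fun c => 2 * c * STNConv (C.erase c) M (b + 1 + c) (b + 1 + c) 0).sum := by
    rw [← Multiset.sum_map_add]
    refine congrArg Multiset.sum (Multiset.map_congr rfl fun c hc => ?_)
    have hw := weight_erase_add hc
    rw [STNConv_eq_STNN (by omega), STNConv_eq_STNN (by omega), STNN_comm _ (b + 1),
      STNN_comm _ (b + 1 + c)]
    ring
  rw [hsum]
  ring

theorem antidiagPrefixSum_STNN_succ (C : Multiset ℕ) (m w : ℕ) :
    antidiagPrefixSum (STNN C) (m + 1) w +
        (C.map fun c => 2 * c * antidiagPrefixSum (STNN (C.erase c)) c (m + 1 + w)).sum =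
      2 * antidiagPrefixSum (STNN C) m w + STNN C m w +
        (C.map fun c => 2 * c * (antidiagPrefixSum (STNN (C.erase c)) (m + 1) (w + c) +
          antidiagPrefixSum (STNN (C.erase c)) (m + 1 + c) w)).sum := by
  set g := fun i j => (C.map fun c => 2 * c *
    (STNN (C.erase c) i (j + c) + STNN (C.erase c) (i + c) j)).sum
  have hg : antidiagPrefixSum g (m + 1) w = (C.map fun c => 2 * c *
      (antidiagPrefixSum (STNN (C.erase c)) (m + 1) (w + c) +
        antidiagPrefixSum (fun i j => STNN (C.erase c) (c + i) j) (m + 1) w)).sum := by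
    unfold antidiagPrefixSum
    refine (Multiset.sum_map_sum_map _ _).trans
      (congrArg Multiset.sum (Multiset.map_congr rfl fun c _ => ?_))
    change ∑ i ∈ Finset.range (m + 1), _ = _
    rw [← Finset.mul_sum, Finset.sum_add_distrib]
    congr 2 <;> refine Finset.sum_congr rfl fun i hi => ?_
    · rw [show m + 1 + w - i + c = m + 1 + (w + c) - i by
        have := Finset.mem_range.mp hi; omega]
    · rw [add_comm i c]
  rw [antidiagPrefixSum_succ_of_pascal (g := g) (STNN_succ_succ C)
      (fun b => by simpa [g] using STNN_zero_succ C b), hg, smul_eq_mul, add_assoc,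
    ← Multiset.sum_map_add]
  refine congrArg (HAdd.hAdd _) (congrArg Multiset.sum (Multiset.map_congr rfl fun c _ => ?_))
  rw [add_comm (m + 1) c, antidiagPrefixSum_add (STNN (C.erase c)) c (m + 1) w]
  ring

theorem antidiagPrefixSum_STNN_mirror (C : Multiset ℕ) (m w : ℕ) :
    antidiagPrefixSum (STNN C) (m + 1) w + 2 * antidiagPrefixSum (STNN C) w m +
        (C.map fun c => 4 * c * antidiagPrefixSum (STNN (C.erase c)) (w + 1 + c) m).sum =
      antidiagPrefixSum (STNN C) (w + 1) m + 2 * antidiagPrefixSum (STNN C) m w +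
        (C.map fun c => 4 * c * antidiagPrefixSum (STNN (C.erase c)) (m + 1 + c) w).sum := by
  have h₁ := antidiagPrefixSum_STNN_succ C m w
  have h₂ := antidiagPrefixSum_STNN_succ C w m
  rw [show w + 1 + m = m + 1 + w by ring, STNN_comm C w m] at h₂
  have hc : (C.map fun c => 2 * c * (antidiagPrefixSum (STNN (C.erase c)) (m + 1) (w + c) +
        antidiagPrefixSum (STNN (C.erase c)) (m + 1 + c) w)).sum +
      (C.map fun c => 4 * c * antidiagPrefixSum (STNN (C.erase c)) (w + 1 + c) m).sum =
      (C.map fun c => 2 * c * (antidiagPrefixSum (STNN (C.erase c)) (w + 1) (m + c) +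
        antidiagPrefixSum (STNN (C.erase c)) (w + 1 + c) m)).sum +
      (C.map fun c => 4 * c * antidiagPrefixSum (STNN (C.erase c)) (m + 1 + c) w).sum := by
    rw [← Multiset.sum_map_add, ← Multiset.sum_map_add]
    refine congrArg Multiset.sum (Multiset.map_congr rfl fun c _ => ?_)
    have e₁ := antidiagPrefixSum_add_antidiagPrefixSum (STNN_comm (C.erase c)) m (w + c)
    have e₂ := antidiagPrefixSum_add_antidiagPrefixSum (STNN_comm (C.erase c)) w (m + c)
    rw [show m + (w + c) + 1 = w + (m + c) + 1 by ring, show w + c + 1 = w + 1 + c by ring] at e₁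
    rw [show m + c + 1 = m + 1 + c by ring] at e₂
    linear_combination 2 * c * e₁ - 2 * c * e₂
  omega

theorem STMW_zero_left (C : Multiset ℕ) (w : ℕ) : STMW C 0 w = 0 := by
  rw [STMW]

theorem STMW_zero_right (C : Multiset ℕ) (m : ℕ) : STMW C m 0 = 0 := by
  cases m <;> rw [STMW]

theorem STMW_succ_right (C : Multiset ℕ) (m w : ℕ) :
    STMW C m (w + 1) = 2 * STMW C m w +
      (C.map fun c => 4 * c * STMW (C.erase c) m (w + 1 + c)).sum +
        4 * antidiagPrefixSum (STNN C) m w := by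
  cases m with
  | zero => simp [STMW_zero_left]
  | succ m =>
    rw [STMW, Multiset.attach_map_val' C fun c => 4 * c * STMW (C.erase c) (m + 1) (w + 1 + c),
      antidiagPrefixSum, Finset.mul_sum]
    refine congrArg (HAdd.hAdd _) (Finset.sum_congr rfl fun η hη => ?_)
    have hη := Finset.mem_range.mp hη
    rw [STNN, STNConv, show (m + 1) + (w + 1) - η - 1 = m + 1 + w - η by omega,
      show C.sum + Multiset.card C + (m + 1) + (w + 1) - 1 = weight C + η + (m + 1 + w - η) by
        unfold weight; omega]
    rfl

theorem STMW_succ_left (C : Multiset ℕ) (m w : ℕ) :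
    STMW C (m + 1) w = 2 * STMW C m w +
      (C.map fun c => 4 * c * STMW (C.erase c) (m + 1 + c) w).sum +
        4 * antidiagPrefixSum (STNN C) w m := by
  induction C using Multiset.strongInductionOn generalizing m w with
  | ih C ihC =>
  induction w with
  | zero => simp [STMW_zero_right]
  | succ w ihw =>
    have hmirror : (C.map fun c => 4 * c * STMW (C.erase c) (m + 1) (w + 1 + c)).sum =
        2 * (C.map fun c => 4 * c * STMW (C.erase c) m (w + 1 + c)).sum +
        (C.map fun c => ((C.erase c).map fun c' =>
          4 * c * (4 * c' * STMW ((C.erase c).erase c') (m + 1 + c') (w + 1 + c))).sum).sum +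
        4 * (C.map fun c => 4 * c * antidiagPrefixSum (STNN (C.erase c)) (w + 1 + c) m).sum := by
      simp only [← Multiset.sum_map_mul_left, ← Multiset.sum_map_add]
      refine congrArg Multiset.sum (Multiset.map_congr rfl fun c hc => ?_)
      rw [ihC _ (Multiset.erase_lt.mpr hc), Multiset.sum_map_mul_left]
      ring
    have hrec : (C.map fun c => 4 * c * STMW (C.erase c) (m + 1 + c) (w + 1)).sum =
        2 * (C.map fun c => 4 * c * STMW (C.erase c) (m + 1 + c) w).sum +
        (C.map fun c => ((C.erase c).map fun c' =>
          4 * c * (4 * c' * STMW ((C.erase c).erase c') (m + 1 + c) (w + 1 + c'))).sum).sum +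
        4 * (C.map fun c => 4 * c * antidiagPrefixSum (STNN (C.erase c)) (m + 1 + c) w).sum := by
      simp only [← Multiset.sum_map_mul_left, ← Multiset.sum_map_add]
      refine congrArg Multiset.sum (Multiset.map_congr rfl fun c _ => ?_)
      rw [STMW_succ_right, Multiset.sum_map_mul_left]
      ring
    have hswap : (C.map fun c => ((C.erase c).map fun c' =>
          4 * c * (4 * c' * STMW ((C.erase c).erase c') (m + 1 + c') (w + 1 + c))).sum).sum =
        (C.map fun c => ((C.erase c).map fun c' =>
          4 * c * (4 * c' * STMW ((C.erase c).erase c') (m + 1 + c) (w + 1 + c'))).sum).sum := by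
      rw [Multiset.sum_map_sum_erase_comm]
      refine congrArg Multiset.sum (Multiset.map_congr rfl fun c _ =>
        congrArg Multiset.sum (Multiset.map_congr rfl fun c' _ => ?_))
      rw [Multiset.erase_comm]
      ring
    rw [STMW_succ_right C (m + 1) w, ihw, hmirror, STMW_succ_right C m w, hrec, hswap]
    linarith [antidiagPrefixSum_STNN_mirror C m w]

theorem STMW_symm_general (C : Multiset ℕ) (m w : ℕ) :
    STMW C m w = STMW C w m := by
  induction C using Multiset.strongInductionOn generalizing m w with
  | ih C ihC =>
  induction m generalizing w with
  | zero => rw [STMW_zero_left, STMW_zero_right]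
  | succ m ihm =>
    rw [STMW_succ_left, STMW_succ_right, ihm]
    refine congrArg (· + _) (congrArg (HAdd.hAdd _) (congrArg Multiset.sum
      (Multiset.map_congr rfl fun c hc => ?_)))
    rw [ihC _ (Multiset.erase_lt.mpr hc)]

/-- Symmetry of ST_MW: ST_MW(C, m, w) = ST_MW(C, w, m). -/
theorem STMW_symm (C : Multiset ℕ) (hC : ∀ c ∈ C, 2 ≤ c) (m w : ℕ) :
    STMW C m w = STMW C w m :=
  STMW_symm_general C m w
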